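/- Let (h_i)_{i≥0} be the Haar system on [0,1] and H_k = {h_i : 2^k ≤ i ≤ 2^{k+1}−1} (with H_{−1} = {h₀}). Let X_n = span({h₀} ∪ ⋃_{k=0}^n H_k), and let G be the finite group of linear maps of X_n generated by the reflections g_i (which swap the two halves of the support of h_i and fix everything outside). Let ‖·‖ be a norm on X_n for which each g_i is an isometry, let A ⊆ {−1,0,…,n} be nonempty, and Y = span(⋃_{k∈A} H_k). Then every linear projection P of X_n onto Y satisfies ‖P‖ ≥ ‖P_Y‖, where P_Y is the orthogonal (L²) projection onto Y. -/

import Mathlib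

open Classical in
/-- The Haar system on `(0,1]`: `h₀ = 1_{(0,1]}`, and for `i = 2^m + j` (`0 ≤ j < 2^m`),
`h_i = 1_{(j/2^m,(2j+1)/2^{m+1}]} - 1_{((2j+1)/2^{m+1},(j+1)/2^m]}`. -/
noncomputable def haar (i : ℕ) (t : ℝ) : ℝ :=
  if i = 0 then (if 0 < t ∧ t ≤ 1 then 1 else 0)
  else
    let m := Nat.log2 i
    let j : ℝ := ((i - 2 ^ m : ℕ) : ℝ)
    if j / 2 ^ m < t ∧ t ≤ (2 * j + 1) / 2 ^ (m + 1) then 1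
    else if (2 * j + 1) / 2 ^ (m + 1) < t ∧ t ≤ (j + 1) / 2 ^ m then -1
    else 0

/-- The `k`-th level of the Haar system: `H_k = {h_i : 2^k ≤ i < 2^{k+1}}`. -/
def haarLevel (k : ℕ) : Set (ℝ → ℝ) := haar '' Set.Ico (2 ^ k) (2 ^ (k + 1))

/-- The `L²[0,1]` inner product. -/
noncomputable def L2inner (f g : ℝ → ℝ) : ℝ := ∫ t in (0:ℝ)..1, f t * g t

/-- The `L¹[0,1]` norm. -/
noncomputable def L1normI (f : ℝ → ℝ) : ℝ := ∫ t in (0:ℝ)..1, |f t|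

open Classical in
/-- The reflection `g_i` (for `h_i ∈ H_k`) swapping the two halves of the support of the
Haar function `h_i` and fixing everything outside it. -/
noncomputable def gmap (i : ℕ) (f : ℝ → ℝ) : ℝ → ℝ := fun t =>
  if haar i t = 1 then f (t + 1 / 2 ^ (Nat.log2 i + 1))
  else if haar i t = -1 then f (t - 1 / 2 ^ (Nat.log2 i + 1))
  else f t

/-!
The reflections `g_i` send every Haar function to `±` a Haar function of the same level, so they
preserve `X` and `Y` and permute the finite spanning set `{±h_j}` of `X`. Hence the automorphisms
of `X` that permute `{±h_j}`, preserve `Y` and are isometries form a finite group containing every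
`g_i`, and averaging the conjugates `g⁻¹ P g` over it yields a projection `Q` onto `Y` with
`‖Q‖ ≤ ‖P‖` that commutes with every `g_i`. The `g_i` preserve the `L²` inner product, and of two
distinct Haar functions the reflection belonging to the deeper one negates it and fixes the other;
so `Q h_j - h_j ⊥ h_a` for all `h_a ∈ Y` (and the Haar system is orthogonal). Thus `Q = P_Y`.
-/

open Set MeasureTheory

noncomputable section

namespace HaarSystem

def dyadic (L q : ℕ) : Set ℝ := Ioc (q / 2 ^ L) ((q + 1) / 2 ^ L)

lemma mem_dyadic {L q : ℕ} {t : ℝ} : t ∈ dyadic L q ↔ q < 2 ^ L * t ∧ 2 ^ L * t ≤ q + 1 := by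
  have h : (0 : ℝ) < 2 ^ L := by positivity
  rw [dyadic, mem_Ioc, div_lt_iff₀ h, le_div_iff₀ h, mul_comm t]

lemma sub_mem_dyadic_iff (L q k : ℕ) (t : ℝ) :
    t - k / 2 ^ L ∈ dyadic L q ↔ t ∈ dyadic L (q + k) := by
  have h : (2 : ℝ) ^ L * (t - k / 2 ^ L) = 2 ^ L * t - k := by field_simp
  rw [mem_dyadic, mem_dyadic, h]
  push_cast
  constructor <;> rintro ⟨h1, h2⟩ <;> constructor <;> linarith

lemma disjoint_dyadic {L q r : ℕ} (h : q ≠ r) : Disjoint (dyadic L q) (dyadic L r) := by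
  refine Set.disjoint_left.2 fun t hq hr => h ?_
  rw [mem_dyadic] at hq hr
  have h1 : (q : ℝ) < r + 1 := by linarith
  have h2 : (r : ℝ) < q + 1 := by linarith
  norm_cast at h1 h2
  omega

lemma mem_dyadic_iff_succ {L q : ℕ} {t : ℝ} :
    t ∈ dyadic L q ↔ t ∈ dyadic (L + 1) (2 * q) ∨ t ∈ dyadic (L + 1) (2 * q + 1) := by
  simp only [mem_dyadic, pow_succ]
  push_cast
  constructor
  · rintro ⟨h1, h2⟩
    rcases le_or_gt (2 ^ L * 2 * t) (2 * q + 1) with h | h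
    · exact Or.inl ⟨by linarith, by linarith⟩
    · exact Or.inr ⟨h, by linarith⟩
  · rintro (⟨h1, h2⟩ | ⟨h1, h2⟩) <;> constructor <;> linarith

lemma dyadic_subset_dyadic_div {l L : ℕ} (h : l ≤ L) (q : ℕ) :
    dyadic L q ⊆ dyadic l (q / 2 ^ (L - l)) := by
  intro t ht
  rw [mem_dyadic] at ht ⊢
  set m := 2 ^ (L - l)
  have hm : (0 : ℝ) < m := by positivity
  have hpow : (2 : ℝ) ^ L = 2 ^ l * m := by
    rw [Nat.cast_pow, Nat.cast_ofNat, ← pow_add, Nat.add_sub_cancel' h]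
  have hlo : ((q / m : ℕ) : ℝ) * m ≤ q := by exact_mod_cast Nat.div_mul_le_self q m
  have hhi : (q : ℝ) + 1 ≤ ((q / m : ℕ) + 1) * m := by
    have := Nat.lt_div_mul_add (a := q) (Nat.two_pow_pos (L - l))
    rw [add_mul, one_mul]
    exact_mod_cast this
  rw [hpow] at ht
  constructor
  · nlinarith
  · nlinarith

lemma dyadic_subset_Ioc {L q : ℕ} (hq : q < 2 ^ L) : dyadic L q ⊆ Ioc 0 1 := by
  intro t ht
  rw [mem_dyadic] at ht
  have h : (q : ℝ) + 1 ≤ 2 ^ L := by exact_mod_cast hq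
  have h2 : (0 : ℝ) < 2 ^ L := by positivity
  constructor
  · nlinarith [(Nat.cast_nonneg q : (0 : ℝ) ≤ q)]
  · nlinarith

/-- `h_j ∈ H_{level j}`, where `H_{-1} = {h₀}`. -/
def level (j : ℕ) : ℤ := if j = 0 then -1 else Nat.log2 j

lemma log2_two_pow_add {L q : ℕ} (hq : q < 2 ^ L) : Nat.log2 (2 ^ L + q) = L := by
  rw [Nat.log2_eq_log_two]
  exact Nat.log_eq_of_pow_le_of_lt_pow (by omega) (by rw [pow_succ]; omega)

lemma level_two_pow_add {L q : ℕ} (hq : q < 2 ^ L) : level (2 ^ L + q) = L := by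
  rw [level, if_neg (by positivity), log2_two_pow_add hq]

lemma exists_eq_two_pow_add {j : ℕ} (hj : j ≠ 0) : ∃ L q, q < 2 ^ L ∧ j = 2 ^ L + q := by
  have h1 := Nat.pow_log_le_self 2 hj
  have h2 := Nat.lt_pow_succ_log_self (by norm_num : 1 < 2) j
  rw [pow_succ] at h2
  exact ⟨Nat.log 2 j, j - 2 ^ Nat.log 2 j, by omega, by omega⟩

lemma neg_one_le_level (j : ℕ) : -1 ≤ level j := by
  unfold level; split_ifs <;> omega

lemma level_eq_neg_one_iff {j : ℕ} : level j = -1 ↔ j = 0 := by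
  rcases eq_or_ne j 0 with rfl | hj
  · simp [level]
  · rw [level, if_neg hj]
    simp only [hj, iff_false]
    omega

lemma ne_zero_of_level_le {i j : ℕ} (hij : i ≠ j) (h : level i ≤ level j) : j ≠ 0 := by
  rintro rfl
  exact hij (level_eq_neg_one_iff.1 (le_antisymm ((level_eq_neg_one_iff.2 rfl) ▸ h)
    (neg_one_le_level i)))

lemma level_le_iff_lt_two_pow {j n : ℕ} : level j ≤ n ↔ j < 2 ^ (n + 1) := by
  rcases eq_or_ne j 0 with rfl | hj
  · rw [level, if_pos rfl]
    exact ⟨fun _ => by positivity, fun _ => by omega⟩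
  obtain ⟨L, q, hq, rfl⟩ := exists_eq_two_pow_add hj
  rw [level_two_pow_add hq, Nat.cast_le]
  constructor
  · intro h
    calc 2 ^ L + q < 2 ^ (L + 1) := by rw [pow_succ]; omega
      _ ≤ 2 ^ (n + 1) := Nat.pow_le_pow_right (by norm_num) (by omega)
  · intro h
    by_contra hlt
    have : 2 ^ (n + 1) ≤ 2 ^ L := Nat.pow_le_pow_right (by norm_num) (by omega)
    omega

lemma level_eq_iff_mem_Ico {j k : ℕ} : level j = k ↔ j ∈ Ico (2 ^ k) (2 ^ (k + 1)) := by
  rcases eq_or_ne j 0 with rfl | hj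
  · rw [level, if_pos rfl, mem_Ico]
    omega
  rw [level, if_neg hj, Nat.cast_inj, Nat.log2_eq_log_two, mem_Ico]
  constructor
  · rintro rfl
    exact ⟨Nat.pow_log_le_self 2 hj, Nat.lt_pow_succ_log_self (by norm_num) j⟩
  · rintro ⟨h1, h2⟩
    exact Nat.log_eq_of_pow_le_of_lt_pow h1 h2

open Classical in
lemma haar_zero_apply (t : ℝ) : haar 0 t = if t ∈ Ioc 0 1 then 1 else 0 := by
  simp [haar, mem_Ioc]

open Classical in
lemma haar_two_pow_add {L q : ℕ} (hq : q < 2 ^ L) (t : ℝ) :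
    haar (2 ^ L + q) t =
      if t ∈ dyadic (L + 1) (2 * q) then 1
      else if t ∈ dyadic (L + 1) (2 * q + 1) then -1 else 0 := by
  have e1 : (q : ℝ) / 2 ^ L = ((2 * q : ℕ) : ℝ) / 2 ^ (L + 1) := by
    push_cast; field_simp; ring
  have e2 : ((q : ℝ) + 1) / 2 ^ L = ((2 * q + 1 : ℕ) + 1 : ℝ) / 2 ^ (L + 1) := by
    push_cast; field_simp; ring
  simp only [haar, if_neg (by positivity : 2 ^ L + q ≠ 0), log2_two_pow_add hq,
    Nat.add_sub_cancel_left, dyadic, mem_Ioc, e1, e2]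
  push_cast
  split_ifs <;> rfl

lemma haar_two_pow_add_of_mem_even {L q : ℕ} (hq : q < 2 ^ L) {t : ℝ}
    (ht : t ∈ dyadic (L + 1) (2 * q)) : haar (2 ^ L + q) t = 1 := by
  rw [haar_two_pow_add hq, if_pos ht]

lemma haar_two_pow_add_of_mem_odd {L q : ℕ} (hq : q < 2 ^ L) {t : ℝ}
    (ht : t ∈ dyadic (L + 1) (2 * q + 1)) : haar (2 ^ L + q) t = -1 := by
  rw [haar_two_pow_add hq, if_neg ((disjoint_dyadic (by omega)).notMem_of_mem_right ht), if_pos ht]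

lemma haar_eq_zero_of_notMem {L q : ℕ} (hq : q < 2 ^ L) {t : ℝ} (ht : t ∉ dyadic L q) :
    haar (2 ^ L + q) t = 0 := by
  rw [mem_dyadic_iff_succ, not_or] at ht
  rw [haar_two_pow_add hq, if_neg ht.1, if_neg ht.2]

lemma haar_sub {L q k : ℕ} (hqk : q + k < 2 ^ L) (t : ℝ) :
    haar (2 ^ L + q) (t - k / 2 ^ L) = haar (2 ^ L + (q + k)) t := by
  have e : (k : ℝ) / 2 ^ L = ((2 * k : ℕ) : ℝ) / 2 ^ (L + 1) := by
    push_cast; field_simp; ring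
  rw [haar_two_pow_add (by omega), haar_two_pow_add hqk, e, sub_mem_dyadic_iff,
    sub_mem_dyadic_iff, mul_add, add_right_comm]

lemma exists_haar_eq_on_dyadic {L q : ℕ} (hq : q < 2 ^ L) (r : ℕ) :
    ∃ c, ∀ t ∈ dyadic (L + 1) r, haar (2 ^ L + q) t = c := by
  by_cases h0 : r = 2 * q
  · exact ⟨1, fun t ht => haar_two_pow_add_of_mem_even hq (h0 ▸ ht)⟩
  by_cases h1 : r = 2 * q + 1
  · exact ⟨-1, fun t ht => haar_two_pow_add_of_mem_odd hq (h1 ▸ ht)⟩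
  · refine ⟨0, fun t ht => ?_⟩
    rw [haar_two_pow_add hq, if_neg ((disjoint_dyadic h0).notMem_of_mem_left ht),
      if_neg ((disjoint_dyadic h1).notMem_of_mem_left ht)]

open Classical in
lemma measurable_haar (j : ℕ) : Measurable (haar j) := by
  rcases eq_or_ne j 0 with rfl | hj
  · rw [funext haar_zero_apply]
    exact Measurable.ite measurableSet_Ioc measurable_const measurable_const
  obtain ⟨L, q, hq, rfl⟩ := exists_eq_two_pow_add hj
  rw [funext (haar_two_pow_add hq)]
  exact Measurable.ite measurableSet_Ioc measurable_const
    (Measurable.ite measurableSet_Ioc measurable_const measurable_const)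

lemma abs_haar_le (j : ℕ) (t : ℝ) : |haar j t| ≤ 1 := by
  rcases eq_or_ne j 0 with rfl | hj
  · rw [haar_zero_apply]; split_ifs <;> norm_num
  obtain ⟨L, q, hq, rfl⟩ := exists_eq_two_pow_add hj
  rw [haar_two_pow_add hq]; split_ifs <;> norm_num

open Classical in
def reflect (l p : ℕ) (t : ℝ) : ℝ :=
  if t ∈ dyadic (l + 1) (2 * p) then t + 1 / 2 ^ (l + 1)
  else if t ∈ dyadic (l + 1) (2 * p + 1) then t - 1 / 2 ^ (l + 1) else t

lemma gmap_two_pow_add_apply {l p : ℕ} (hp : p < 2 ^ l) (f : ℝ → ℝ) (t : ℝ) :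
    gmap (2 ^ l + p) f t = f (reflect l p t) := by
  simp only [gmap, reflect, haar_two_pow_add hp, log2_two_pow_add hp]
  split_ifs <;> first | rfl | norm_num at *

lemma add_mem_dyadic_odd_iff {l p : ℕ} {t : ℝ} :
    t + 1 / 2 ^ (l + 1) ∈ dyadic (l + 1) (2 * p + 1) ↔ t ∈ dyadic (l + 1) (2 * p) := by
  simpa using (sub_mem_dyadic_iff (l + 1) (2 * p) 1 (t + 1 / 2 ^ (l + 1))).symm

lemma sub_mem_dyadic_even_iff {l p : ℕ} {t : ℝ} :
    t - 1 / 2 ^ (l + 1) ∈ dyadic (l + 1) (2 * p) ↔ t ∈ dyadic (l + 1) (2 * p + 1) := by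
  simpa using sub_mem_dyadic_iff (l + 1) (2 * p) 1 t

lemma reflect_of_mem_even {l p : ℕ} {t : ℝ} (h : t ∈ dyadic (l + 1) (2 * p)) :
    reflect l p t = t + 1 / 2 ^ (l + 1) := by
  rw [reflect, if_pos h]

lemma reflect_of_mem_odd {l p : ℕ} {t : ℝ} (h : t ∈ dyadic (l + 1) (2 * p + 1)) :
    reflect l p t = t - 1 / 2 ^ (l + 1) := by
  rw [reflect, if_neg ((disjoint_dyadic (by omega)).notMem_of_mem_right h), if_pos h]

lemma reflect_of_notMem {l p : ℕ} {t : ℝ} (h : t ∉ dyadic l p) : reflect l p t = t := by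
  rw [mem_dyadic_iff_succ, not_or] at h
  rw [reflect, if_neg h.1, if_neg h.2]

lemma reflect_mem_dyadic {l p : ℕ} {t : ℝ} (h : t ∈ dyadic l p) : reflect l p t ∈ dyadic l p := by
  rcases mem_dyadic_iff_succ.1 h with h | h
  · rw [reflect_of_mem_even h, mem_dyadic_iff_succ]
    exact Or.inr (add_mem_dyadic_odd_iff.2 h)
  · rw [reflect_of_mem_odd h, mem_dyadic_iff_succ]
    exact Or.inl (sub_mem_dyadic_even_iff.2 h)

lemma reflect_reflect (l p : ℕ) (t : ℝ) : reflect l p (reflect l p t) = t := by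
  by_cases h0 : t ∈ dyadic (l + 1) (2 * p)
  · rw [reflect_of_mem_even h0, reflect_of_mem_odd (add_mem_dyadic_odd_iff.2 h0),
      add_sub_cancel_right]
  by_cases h1 : t ∈ dyadic (l + 1) (2 * p + 1)
  · rw [reflect_of_mem_odd h1, reflect_of_mem_even (sub_mem_dyadic_even_iff.2 h1), sub_add_cancel]
  have h : t ∉ dyadic l p := by rw [mem_dyadic_iff_succ]; tauto
  rw [reflect_of_notMem h, reflect_of_notMem h]

lemma gmap_gmap {i : ℕ} (hi : i ≠ 0) (f : ℝ → ℝ) : gmap i (gmap i f) = f := by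
  obtain ⟨l, p, hp, rfl⟩ := exists_eq_two_pow_add hi
  ext t
  rw [gmap_two_pow_add_apply hp, gmap_two_pow_add_apply hp, reflect_reflect]

lemma gmap_eq_self_of_eq_on_dyadic {l p : ℕ} (hp : p < 2 ^ l) {f : ℝ → ℝ} {c : ℝ}
    (hf : ∀ t ∈ dyadic l p, f t = c) : gmap (2 ^ l + p) f = f := by
  ext t
  rw [gmap_two_pow_add_apply hp]
  by_cases h : t ∈ dyadic l p
  · rw [hf _ h, hf _ (reflect_mem_dyadic h)]
  · rw [reflect_of_notMem h]

def gmapₗ (i : ℕ) : (ℝ → ℝ) →ₗ[ℝ] (ℝ → ℝ) where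
  toFun := gmap i
  map_add' f g := by ext t; simp only [gmap, Pi.add_apply]; split_ifs <;> rfl
  map_smul' c f := by ext t; simp only [gmap, Pi.smul_apply, RingHom.id_apply]; split_ifs <;> rfl

lemma gmap_neg (i : ℕ) (f : ℝ → ℝ) : gmap i (-f) = -gmap i f :=
  (gmapₗ i).map_neg f

lemma gmap_haar_self {i : ℕ} (hi : i ≠ 0) : gmap i (haar i) = -haar i := by
  obtain ⟨l, p, hp, rfl⟩ := exists_eq_two_pow_add hi
  ext t
  rw [gmap_two_pow_add_apply hp, Pi.neg_apply]
  by_cases h0 : t ∈ dyadic (l + 1) (2 * p)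
  · rw [reflect_of_mem_even h0, haar_two_pow_add_of_mem_even hp h0,
      haar_two_pow_add_of_mem_odd hp (add_mem_dyadic_odd_iff.2 h0)]
  by_cases h1 : t ∈ dyadic (l + 1) (2 * p + 1)
  · rw [reflect_of_mem_odd h1, haar_two_pow_add_of_mem_odd hp h1,
      haar_two_pow_add_of_mem_even hp (sub_mem_dyadic_even_iff.2 h1), neg_neg]
  have h : t ∉ dyadic l p := by rw [mem_dyadic_iff_succ]; tauto
  rw [reflect_of_notMem h, haar_eq_zero_of_notMem hp h, neg_zero]

lemma exists_haar_eq_on_dyadic_of_level_le {l p j : ℕ} (hp : p < 2 ^ l) (hj : j ≠ 2 ^ l + p)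
    (h : level j ≤ l) : ∃ c, ∀ t ∈ dyadic l p, haar j t = c := by
  rcases eq_or_ne j 0 with rfl | hj0
  · exact ⟨1, fun t ht => by rw [haar_zero_apply, if_pos (dyadic_subset_Ioc hp ht)]⟩
  obtain ⟨L, q, hq, rfl⟩ := exists_eq_two_pow_add hj0
  rw [level_two_pow_add hq, Nat.cast_le] at h
  rcases h.lt_or_eq with hlt | rfl
  · obtain ⟨c, hc⟩ := exists_haar_eq_on_dyadic hq (p / 2 ^ (l - (L + 1)))
    exact ⟨c, fun t ht => hc t (dyadic_subset_dyadic_div hlt p ht)⟩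
  · have hqp : q ≠ p := by rintro rfl; exact hj rfl
    exact ⟨0, fun t ht =>
      haar_eq_zero_of_notMem hq ((disjoint_dyadic hqp.symm).notMem_of_mem_left ht)⟩

lemma gmap_haar_of_level_le {i j : ℕ} (hi : i ≠ 0) (hji : j ≠ i) (h : level j ≤ level i) :
    gmap i (haar j) = haar j := by
  obtain ⟨l, p, hp, rfl⟩ := exists_eq_two_pow_add hi
  rw [level_two_pow_add hp] at h
  obtain ⟨c, hc⟩ := exists_haar_eq_on_dyadic_of_level_le hp hji h
  exact gmap_eq_self_of_eq_on_dyadic hp hc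

lemma add_two_pow_lt_of_div_eq {l p L q : ℕ} (hp : p < 2 ^ l) (hlL : l < L)
    (hq : q / 2 ^ (L - (l + 1)) = 2 * p) : q + 2 ^ (L - (l + 1)) < 2 ^ L := by
  set k := 2 ^ (L - (l + 1))
  have hk : 2 ^ L = 2 ^ l * 2 * k := by
    rw [← pow_succ, ← pow_add]; congr 1; omega
  have h1 : q < 2 * p * k + k := by
    have := Nat.lt_div_mul_add (a := q) (Nat.two_pow_pos (L - (l + 1)))
    rwa [hq] at this
  have h2 : (p + 1) * (2 * k) ≤ 2 ^ l * (2 * k) := Nat.mul_le_mul_right _ hp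
  rw [hk]
  nlinarith

/-- If the support of `h_{2^L+q}` lies in the left half of the support of `h_{2^l+p}`, then
`g_{2^l+p}` translates it onto the right half. -/
lemma gmap_haar_of_div_eq_even {l p L q : ℕ} (hp : p < 2 ^ l) (hlL : l < L)
    (hq : q / 2 ^ (L - (l + 1)) = 2 * p) :
    gmap (2 ^ l + p) (haar (2 ^ L + q)) = haar (2 ^ L + (q + 2 ^ (L - (l + 1)))) := by
  set k := 2 ^ (L - (l + 1))
  have hqk := add_two_pow_lt_of_div_eq hp hlL hq
  have hq' : q < 2 ^ L := lt_of_le_of_lt (Nat.le_add_right q k) hqk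
  have hsub : dyadic L q ⊆ dyadic (l + 1) (2 * p) := hq ▸ dyadic_subset_dyadic_div hlL q
  have hsub' : dyadic L (q + k) ⊆ dyadic (l + 1) (2 * p + 1) := by
    have h := dyadic_subset_dyadic_div hlL (q + k)
    rwa [Nat.add_div_right q (Nat.two_pow_pos _), hq] at h
  have hδ : (1 : ℝ) / 2 ^ (l + 1) = (k : ℝ) / 2 ^ L := by
    have : (2 : ℝ) ^ L = 2 ^ (l + 1) * k := by
      rw [Nat.cast_pow, Nat.cast_ofNat, ← pow_add]; congr 1; omega
    have hk0 : (k : ℝ) ≠ 0 := by positivity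
    rw [this]; field_simp
  have hdisj : Disjoint (dyadic (l + 1) (2 * p)) (dyadic (l + 1) (2 * p + 1)) :=
    disjoint_dyadic (by omega)
  ext t
  rw [gmap_two_pow_add_apply hp]
  by_cases h0 : t ∈ dyadic (l + 1) (2 * p)
  · rw [reflect_of_mem_even h0,
      haar_eq_zero_of_notMem hq' fun h =>
        hdisj.notMem_of_mem_right (add_mem_dyadic_odd_iff.2 h0) (hsub h),
      haar_eq_zero_of_notMem hqk fun h => hdisj.notMem_of_mem_left h0 (hsub' h)]
  by_cases h1 : t ∈ dyadic (l + 1) (2 * p + 1)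
  · rw [reflect_of_mem_odd h1, hδ, haar_sub hqk]
  · rw [reflect_of_notMem (by rw [mem_dyadic_iff_succ]; tauto),
      haar_eq_zero_of_notMem hq' fun h => h0 (hsub h),
      haar_eq_zero_of_notMem hqk fun h => h1 (hsub' h)]

lemma gmap_haar_of_div_eq_odd {l p L q : ℕ} (hp : p < 2 ^ l) (hlL : l < L)
    (hq : q / 2 ^ (L - (l + 1)) = 2 * p + 1) :
    gmap (2 ^ l + p) (haar (2 ^ L + q)) = haar (2 ^ L + (q - 2 ^ (L - (l + 1)))) := by
  set k := 2 ^ (L - (l + 1)) with hk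
  have hk0 : 0 < k := Nat.two_pow_pos _
  have hkq : k ≤ q := by
    by_contra h
    rw [Nat.div_eq_of_lt (not_le.1 h)] at hq
    omega
  have hq₀ : (q - k) / k = 2 * p := by
    rw [Nat.div_eq_sub_div hk0 hkq] at hq
    omega
  have h := gmap_haar_of_div_eq_even hp hlL hq₀
  rw [← hk, Nat.sub_add_cancel hkq] at h
  rw [← h, gmap_gmap (by positivity)]

lemma gmap_haar_of_div_ne {l p L q : ℕ} (hp : p < 2 ^ l) (hq : q < 2 ^ L) (hlL : l < L)
    (heven : q / 2 ^ (L - (l + 1)) ≠ 2 * p) (hodd : q / 2 ^ (L - (l + 1)) ≠ 2 * p + 1) :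
    gmap (2 ^ l + p) (haar (2 ^ L + q)) = haar (2 ^ L + q) := by
  refine gmap_eq_self_of_eq_on_dyadic hp (c := 0) fun t ht =>
    haar_eq_zero_of_notMem hq fun htq => ?_
  have htr := dyadic_subset_dyadic_div hlL q htq
  rcases mem_dyadic_iff_succ.1 ht with ht' | ht'
  · exact (disjoint_dyadic heven).notMem_of_mem_left htr ht'
  · exact (disjoint_dyadic hodd).notMem_of_mem_left htr ht'

lemma exists_gmap_haar {i : ℕ} (hi : i ≠ 0) (j : ℕ) :
    ∃ j', level j' = level j ∧ (gmap i (haar j) = haar j' ∨ gmap i (haar j) = -haar j') := by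
  by_cases hji : j = i
  · rw [hji]
    exact ⟨i, rfl, Or.inr (gmap_haar_self hi)⟩
  by_cases hle : level j ≤ level i
  · exact ⟨j, rfl, Or.inl (gmap_haar_of_level_le hi hji hle)⟩
  have hj0 : j ≠ 0 := ne_zero_of_level_le (Ne.symm hji) (le_of_not_ge hle)
  obtain ⟨l, p, hp, rfl⟩ := exists_eq_two_pow_add hi
  obtain ⟨L, q, hq, rfl⟩ := exists_eq_two_pow_add hj0
  rw [level_two_pow_add hp, level_two_pow_add hq, Nat.cast_le, not_le] at hle
  by_cases heven : q / 2 ^ (L - (l + 1)) = 2 * p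
  · refine ⟨_, ?_, Or.inl (gmap_haar_of_div_eq_even hp hle heven)⟩
    rw [level_two_pow_add (add_two_pow_lt_of_div_eq hp hle heven), level_two_pow_add hq]
  by_cases hodd : q / 2 ^ (L - (l + 1)) = 2 * p + 1
  · refine ⟨_, ?_, Or.inl (gmap_haar_of_div_eq_odd hp hle hodd)⟩
    rw [level_two_pow_add (lt_of_le_of_lt (Nat.sub_le _ _) hq), level_two_pow_add hq]
  · exact ⟨_, rfl, Or.inl (gmap_haar_of_div_ne hp hq hle heven hodd)⟩

def haarSpan (B : Set ℤ) : Submodule ℝ (ℝ → ℝ) := Submodule.span ℝ (haar '' {j | level j ∈ B})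

lemma haar_mem_haarSpan {B : Set ℤ} {j : ℕ} (h : level j ∈ B) : haar j ∈ haarSpan B :=
  Submodule.subset_span ⟨j, h, rfl⟩

def signedHaar (B : Set ℤ) : Set (ℝ → ℝ) :=
  haar '' {j | level j ∈ B} ∪ (fun j => -haar j) '' {j | level j ∈ B}

lemma signedHaar_finite {B : Set ℤ} (hB : {j | level j ∈ B}.Finite) : (signedHaar B).Finite :=
  (hB.image _).union (hB.image _)

lemma signedHaar_subset_haarSpan (B : Set ℤ) : signedHaar B ⊆ haarSpan B := by
  rintro _ (⟨j, hj, rfl⟩ | ⟨j, hj, rfl⟩)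
  · exact haar_mem_haarSpan hj
  · exact Submodule.neg_mem _ (haar_mem_haarSpan hj)

lemma neg_mem_signedHaar {B : Set ℤ} {f : ℝ → ℝ} (hf : f ∈ signedHaar B) : -f ∈ signedHaar B := by
  rcases hf with ⟨j, hj, rfl⟩ | ⟨j, hj, rfl⟩
  · exact Or.inr ⟨j, hj, rfl⟩
  · exact Or.inl ⟨j, hj, (neg_neg _).symm⟩

lemma gmap_haar_mem_signedHaar {i : ℕ} (hi : i ≠ 0) {B : Set ℤ} {j : ℕ} (hj : level j ∈ B) :
    gmap i (haar j) ∈ signedHaar B := by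
  obtain ⟨j', hj', h | h⟩ := exists_gmap_haar hi j
  · exact h ▸ Or.inl ⟨j', show level j' ∈ B from hj' ▸ hj, rfl⟩
  · exact h ▸ Or.inr ⟨j', show level j' ∈ B from hj' ▸ hj, rfl⟩

lemma gmap_mem_signedHaar {i : ℕ} (hi : i ≠ 0) {B : Set ℤ} {f : ℝ → ℝ} (hf : f ∈ signedHaar B) :
    gmap i f ∈ signedHaar B := by
  rcases hf with ⟨j, hj, rfl⟩ | ⟨j, hj, rfl⟩
  · exact gmap_haar_mem_signedHaar hi hj
  · exact gmap_neg i (haar j) ▸ neg_mem_signedHaar (gmap_haar_mem_signedHaar hi hj)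

lemma gmap_mem_signedHaar_iff {i : ℕ} (hi : i ≠ 0) {B : Set ℤ} {f : ℝ → ℝ} :
    gmap i f ∈ signedHaar B ↔ f ∈ signedHaar B :=
  ⟨fun h => gmap_gmap hi f ▸ gmap_mem_signedHaar hi h, gmap_mem_signedHaar hi⟩

lemma gmap_mem_haarSpan {i : ℕ} (hi : i ≠ 0) {B : Set ℤ} {f : ℝ → ℝ} (hf : f ∈ haarSpan B) :
    gmap i f ∈ haarSpan B := by
  have hle : haarSpan B ≤ (haarSpan B).comap (gmapₗ i) := Submodule.span_le.2 <| by
    rintro _ ⟨j, hj, rfl⟩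
    exact signedHaar_subset_haarSpan B (gmap_haar_mem_signedHaar hi hj)
  exact hle hf

lemma gmap_mem_haarSpan_iff {i : ℕ} (hi : i ≠ 0) {B : Set ℤ} {f : ℝ → ℝ} :
    gmap i f ∈ haarSpan B ↔ f ∈ haarSpan B :=
  ⟨fun h => gmap_gmap hi f ▸ gmap_mem_haarSpan hi h, gmap_mem_haarSpan hi⟩

def gmapEquiv (B : Set ℤ) {i : ℕ} (hi : i ≠ 0) : haarSpan B ≃ₗ[ℝ] haarSpan B :=
  LinearEquiv.ofInvolutive ((gmapₗ i).restrict fun _ hf => gmap_mem_haarSpan hi hf)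
    fun x => Subtype.ext (gmap_gmap hi x)

@[simp]
lemma coe_gmapEquiv_apply (B : Set ℤ) {i : ℕ} (hi : i ≠ 0) (x : haarSpan B) :
    (gmapEquiv B hi x : ℝ → ℝ) = gmap i x := rfl

def boundedMeasurable : Submodule ℝ (ℝ → ℝ) where
  carrier := {f | Measurable f ∧ ∃ C, ∀ t, |f t| ≤ C}
  add_mem' := fun ⟨hf, C, hC⟩ ⟨hg, D, hD⟩ =>
    ⟨hf.add hg, C + D, fun t => (abs_add_le _ _).trans (add_le_add (hC t) (hD t))⟩
  zero_mem' := ⟨measurable_const, 0, fun t => by simp⟩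
  smul_mem' c _ := fun ⟨hf, C, hC⟩ =>
    ⟨hf.const_smul c, |c| * C, fun t => by
      rw [Pi.smul_apply, smul_eq_mul, abs_mul]
      exact mul_le_mul_of_nonneg_left (hC t) (abs_nonneg c)⟩

lemma haarSpan_le_boundedMeasurable (B : Set ℤ) : haarSpan B ≤ boundedMeasurable :=
  Submodule.span_le.2 <| by
    rintro _ ⟨j, -, rfl⟩
    exact ⟨measurable_haar j, 1, abs_haar_le j⟩

lemma intervalIntegrable_mul_of_mem {f g : ℝ → ℝ} (hf : f ∈ boundedMeasurable)
    (hg : g ∈ boundedMeasurable) (a b : ℝ) :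
    IntervalIntegrable (fun t => f t * g t) volume a b := by
  obtain ⟨hfm, C, hC⟩ := hf
  obtain ⟨hgm, D, hD⟩ := hg
  refine (intervalIntegrable_const (c := C * D)).mono_fun (hfm.mul hgm).aestronglyMeasurable
    (ae_of_all _ fun t => ?_)
  simp only [Real.norm_eq_abs, abs_mul]
  exact mul_le_mul ((hC t).trans (le_abs_self C)) ((hD t).trans (le_abs_self D))
    (abs_nonneg _) (abs_nonneg _)

lemma intervalIntegrable_haarSpan_mul {B C : Set ℤ} {f g : ℝ → ℝ} (hf : f ∈ haarSpan B)
    (hg : g ∈ haarSpan C) : IntervalIntegrable (fun t => f t * g t) volume 0 1 :=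
  intervalIntegrable_mul_of_mem (haarSpan_le_boundedMeasurable B hf)
    (haarSpan_le_boundedMeasurable C hg) 0 1

lemma L2inner_comm (f g : ℝ → ℝ) : L2inner f g = L2inner g f := by
  simp only [L2inner, mul_comm]

lemma L2inner_neg_right (f g : ℝ → ℝ) : L2inner f (-g) = -L2inner f g := by
  simp only [L2inner, Pi.neg_apply, mul_neg, intervalIntegral.integral_neg]

lemma L2inner_smul_left (c : ℝ) (f g : ℝ → ℝ) : L2inner (c • f) g = c * L2inner f g := by
  simp only [L2inner, Pi.smul_apply, smul_eq_mul, mul_assoc, intervalIntegral.integral_const_mul]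

lemma L2inner_zero_left (g : ℝ → ℝ) : L2inner 0 g = 0 := by
  simp [L2inner]

lemma L2inner_add_left {f g h : ℝ → ℝ} (hf : IntervalIntegrable (fun t => f t * h t) volume 0 1)
    (hg : IntervalIntegrable (fun t => g t * h t) volume 0 1) :
    L2inner (f + g) h = L2inner f h + L2inner g h := by
  simp only [L2inner, Pi.add_apply, add_mul]
  exact intervalIntegral.integral_add hf hg

lemma L2inner_sub_left {f g h : ℝ → ℝ} (hf : IntervalIntegrable (fun t => f t * h t) volume 0 1)
    (hg : IntervalIntegrable (fun t => g t * h t) volume 0 1) :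
    L2inner (f - g) h = L2inner f h - L2inner g h := by
  simp only [L2inner, Pi.sub_apply, sub_mul]
  exact intervalIntegral.integral_sub hf hg

lemma intervalIntegrable_and_integral_eq_of_eqOn_Ioc {F G : ℝ → ℝ} {a b : ℝ} (hab : a ≤ b)
    (hG : IntervalIntegrable G volume a b) (h : EqOn F G (Ioc a b)) :
    IntervalIntegrable F volume a b ∧ ∫ t in a..b, F t = ∫ t in a..b, G t := by
  have h' : EqOn G F (uIoo a b) := by
    rw [uIoo_of_le hab]; exact fun t ht => (h (Ioo_subset_Ioc_self ht)).symm
  exact ⟨hG.congr_uIoo h', intervalIntegral.integral_congr_uIoo h'.symm⟩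

lemma intervalIntegral_add_adjacent_intervals₄ {H : ℝ → ℝ} {a₀ a₁ a₂ a₃ a₄ : ℝ}
    (h₁ : IntervalIntegrable H volume a₀ a₁) (h₂ : IntervalIntegrable H volume a₁ a₂)
    (h₃ : IntervalIntegrable H volume a₂ a₃) (h₄ : IntervalIntegrable H volume a₃ a₄) :
    ∫ t in a₀..a₄, H t = (∫ t in a₀..a₁, H t) + (∫ t in a₁..a₂, H t) + (∫ t in a₂..a₃, H t) +
      ∫ t in a₃..a₄, H t := by
  rw [intervalIntegral.integral_add_adjacent_intervals h₁ h₂,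
    intervalIntegral.integral_add_adjacent_intervals (h₁.trans h₂) h₃,
    intervalIntegral.integral_add_adjacent_intervals ((h₁.trans h₂).trans h₃) h₄]

lemma integral_comp_eq_of_swap {F φ : ℝ → ℝ} {a δ : ℝ} (ha : 0 ≤ a) (hδ : 0 ≤ δ)
    (h1 : a + 2 * δ ≤ 1) (hF : IntervalIntegrable F volume 0 1)
    (hφ₁ : ∀ t ∈ Ioc 0 a, φ t = t) (hφ₂ : ∀ t ∈ Ioc a (a + δ), φ t = t + δ)
    (hφ₃ : ∀ t ∈ Ioc (a + δ) (a + 2 * δ), φ t = t - δ) (hφ₄ : ∀ t ∈ Ioc (a + 2 * δ) 1, φ t = t) :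
    ∫ t in (0 : ℝ)..1, F (φ t) = ∫ t in (0 : ℝ)..1, F t := by
  have hFsub : ∀ c d, 0 ≤ c → c ≤ d → d ≤ 1 → IntervalIntegrable F volume c d :=
    fun c d hc hcd hd => hF.mono_set <| by
      rw [uIcc_of_le hcd, uIcc_of_le zero_le_one]; exact Icc_subset_Icc hc hd
  have f₁ := hFsub 0 a le_rfl ha (by linarith)
  have f₂ := hFsub a (a + δ) ha (by linarith) (by linarith)
  have f₃ := hFsub (a + δ) (a + 2 * δ) (by linarith) (by linarith) h1
  have f₄ := hFsub (a + 2 * δ) 1 (by linarith) h1 le_rfl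
  obtain ⟨g₁, e₁⟩ := intervalIntegrable_and_integral_eq_of_eqOn_Ioc ha f₁ (F := fun t => F (φ t))
    fun t ht => congrArg F (hφ₁ t ht)
  have f₂' : IntervalIntegrable (fun t => F (t + δ)) volume a (a + δ) := by
    simpa only [add_sub_cancel_right, show a + 2 * δ - δ = a + δ by ring] using
      f₃.comp_add_right δ
  have f₃' : IntervalIntegrable (fun t => F (t - δ)) volume (a + δ) (a + 2 * δ) := by
    simpa only [show a + δ + δ = a + 2 * δ by ring] using f₂.comp_sub_right δ
  obtain ⟨g₂, e₂⟩ := intervalIntegrable_and_integral_eq_of_eqOn_Ioc (by linarith) f₂'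
    (F := fun t => F (φ t)) fun t ht => congrArg F (hφ₂ t ht)
  obtain ⟨g₃, e₃⟩ := intervalIntegrable_and_integral_eq_of_eqOn_Ioc (by linarith) f₃'
    (F := fun t => F (φ t)) fun t ht => congrArg F (hφ₃ t ht)
  obtain ⟨g₄, e₄⟩ := intervalIntegrable_and_integral_eq_of_eqOn_Ioc h1 f₄ (F := fun t => F (φ t))
    fun t ht => congrArg F (hφ₄ t ht)
  rw [intervalIntegral_add_adjacent_intervals₄ g₁ g₂ g₃ g₄,
    intervalIntegral_add_adjacent_intervals₄ f₁ f₂ f₃ f₄, e₁, e₂, e₃, e₄,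
    intervalIntegral.integral_comp_add_right, intervalIntegral.integral_comp_sub_right,
    show a + δ + δ = a + 2 * δ by ring, add_sub_cancel_right, show a + 2 * δ - δ = a + δ by ring]
  ring

lemma integral_comp_reflect {l p : ℕ} (hp : p < 2 ^ l) {F : ℝ → ℝ}
    (hF : IntervalIntegrable F volume 0 1) :
    ∫ t in (0 : ℝ)..1, F (reflect l p t) = ∫ t in (0 : ℝ)..1, F t := by
  set δ : ℝ := 1 / 2 ^ (l + 1)
  set a : ℝ := (2 * p : ℕ) / 2 ^ (l + 1)
  have h1 : a + 2 * δ ≤ 1 := by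
    have : ((p : ℝ) + 1) ≤ 2 ^ l := by exact_mod_cast hp
    simp only [a, δ, pow_succ]; push_cast; field_simp; linarith
  have heven : dyadic (l + 1) (2 * p) = Ioc a (a + δ) := by
    simp only [dyadic, a, δ]; congr 1; ring
  have hodd : dyadic (l + 1) (2 * p + 1) = Ioc (a + δ) (a + 2 * δ) := by
    simp only [dyadic, a, δ]; push_cast; congr 1 <;> ring
  have hout : ∀ t, t ≤ a ∨ a + 2 * δ < t → reflect l p t = t := fun t ht =>
    reflect_of_notMem fun h => by
      rcases mem_dyadic_iff_succ.1 h with h | h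
      · rw [heven] at h; rcases ht with ht | ht <;> linarith [h.1, h.2]
      · rw [hodd] at h; rcases ht with ht | ht <;> linarith [h.1, h.2]
  exact integral_comp_eq_of_swap (by positivity) (by positivity) h1 hF
    (fun t ht => hout t (Or.inl ht.2)) (fun t ht => reflect_of_mem_even (heven ▸ ht))
    (fun t ht => reflect_of_mem_odd (hodd ▸ ht)) (fun t ht => hout t (Or.inr ht.1))

lemma L2inner_gmap_gmap {i : ℕ} (hi : i ≠ 0) {f g : ℝ → ℝ}
    (hfg : IntervalIntegrable (fun t => f t * g t) volume 0 1) :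
    L2inner (gmap i f) (gmap i g) = L2inner f g := by
  obtain ⟨l, p, hp, rfl⟩ := exists_eq_two_pow_add hi
  simp only [L2inner, gmap_two_pow_add_apply hp]
  exact integral_comp_reflect hp hfg

lemma L2inner_eq_zero_of_gmap_eq_neg {i : ℕ} (hi : i ≠ 0) {f g : ℝ → ℝ}
    (hfg : IntervalIntegrable (fun t => f t * g t) volume 0 1) (hf : gmap i f = f)
    (hg : gmap i g = -g) : L2inner f g = 0 := by
  have h := L2inner_gmap_gmap hi hfg
  rw [hf, hg, L2inner_neg_right] at h
  linarith

lemma L2inner_haar_haar_of_ne {i j : ℕ} (hij : i ≠ j) : L2inner (haar i) (haar j) = 0 := by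
  wlog h : level i ≤ level j generalizing i j
  · rw [L2inner_comm]
    exact this hij.symm (le_of_not_ge h)
  have hj := ne_zero_of_level_le hij h
  exact L2inner_eq_zero_of_gmap_eq_neg hj
    (intervalIntegrable_haarSpan_mul (haar_mem_haarSpan (mem_univ _))
      (haar_mem_haarSpan (mem_univ _)))
    (gmap_haar_of_level_le hj hij h) (gmap_haar_self hj)

lemma exists_haar_mul_self_eq_indicator (j : ℕ) :
    ∃ L q, q < 2 ^ L ∧ ∀ t, haar j t * haar j t = (dyadic L q).indicator (1 : ℝ → ℝ) t := by
  rcases eq_or_ne j 0 with rfl | hj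
  · refine ⟨0, 0, by norm_num, fun t => ?_⟩
    have h : dyadic 0 0 = Ioc 0 1 := by simp [dyadic]
    rw [haar_zero_apply, h]
    by_cases ht : t ∈ Ioc (0 : ℝ) 1 <;> simp [ht]
  obtain ⟨L, q, hq, rfl⟩ := exists_eq_two_pow_add hj
  refine ⟨L, q, hq, fun t => ?_⟩
  by_cases ht : t ∈ dyadic L q
  · rw [indicator_of_mem ht]
    rcases mem_dyadic_iff_succ.1 ht with h | h
    · rw [haar_two_pow_add_of_mem_even hq h]; norm_num
    · rw [haar_two_pow_add_of_mem_odd hq h]; norm_num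
  · rw [indicator_of_notMem ht, haar_eq_zero_of_notMem hq ht, mul_zero]

lemma integral_indicator_dyadic {L q : ℕ} (hq : q < 2 ^ L) :
    ∫ t in (0 : ℝ)..1, (dyadic L q).indicator (1 : ℝ → ℝ) t = 1 / 2 ^ L := by
  have hm : MeasurableSet (dyadic L q) := measurableSet_Ioc
  rw [intervalIntegral.integral_of_le zero_le_one, setIntegral_indicator hm,
    inter_eq_self_of_subset_right (dyadic_subset_Ioc hq), dyadic]
  simp only [Pi.one_apply, setIntegral_const, smul_eq_mul, mul_one]
  rw [Real.volume_real_Ioc_of_le (by gcongr; linarith)]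
  ring

lemma L2inner_haar_self_pos (j : ℕ) : 0 < L2inner (haar j) (haar j) := by
  obtain ⟨L, q, hq, h⟩ := exists_haar_mul_self_eq_indicator j
  simp only [L2inner, h, integral_indicator_dyadic hq]
  positivity

lemma L2inner_sum_haar_left {s : Finset ℕ} (c : ℕ → ℝ) (a : ℕ) :
    L2inner (∑ b ∈ s, c b • haar b) (haar a) = ∑ b ∈ s, c b * L2inner (haar b) (haar a) := by
  simp only [L2inner, Finset.sum_apply, Pi.smul_apply, smul_eq_mul, Finset.sum_mul, mul_assoc]
  rw [intervalIntegral.integral_finsetSum fun b _ => (intervalIntegrable_haarSpan_mul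
    (haar_mem_haarSpan (mem_univ _)) (haar_mem_haarSpan (mem_univ _))).const_mul (c b)]
  simp only [intervalIntegral.integral_const_mul]

lemma eq_zero_of_L2inner_haar_eq_zero {B : Set ℤ} {d : ℝ → ℝ} (hd : d ∈ haarSpan B)
    (h : ∀ a, level a ∈ B → L2inner d (haar a) = 0) : d = 0 := by
  obtain ⟨c, hc, rfl⟩ := (Finsupp.mem_span_image_iff_linearCombination ℝ).1 hd
  suffices c = 0 by rw [this, map_zero]
  ext a
  by_cases ha : level a ∈ B
  · have h' := h a ha
    rw [Finsupp.linearCombination_apply, Finsupp.sum, L2inner_sum_haar_left,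
      Finset.sum_eq_single a (fun b _ hba => by rw [L2inner_haar_haar_of_ne hba, mul_zero])
        (fun haS => by rw [Finsupp.notMem_support_iff.1 haS, zero_mul])] at h'
    exact (mul_eq_zero.1 h').resolve_right (L2inner_haar_self_pos a).ne'
  · exact Finsupp.notMem_support_iff.1 fun has => ha (hc has)

section Averaging

variable {V : Type*} [AddCommGroup V] [Module ℝ V]

def symmetryGroup (S : Set V) (W : Submodule ℝ V) (p : Seminorm ℝ V) :
    Subgroup (V ≃ₗ[ℝ] V) where
  carrier := {g | (∀ v, g v ∈ S ↔ v ∈ S) ∧ (∀ v, g v ∈ W ↔ v ∈ W) ∧ ∀ v, p (g v) = p v}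
  mul_mem' := fun ⟨hS, hW, hp⟩ ⟨hS', hW', hp'⟩ =>
    ⟨fun v => (hS _).trans (hS' v), fun v => (hW _).trans (hW' v), fun v => (hp _).trans (hp' v)⟩
  one_mem' := ⟨fun _ => Iff.rfl, fun _ => Iff.rfl, fun _ => rfl⟩
  inv_mem' := fun {g} ⟨hS, hW, hp⟩ =>
    ⟨fun v => by simpa using (hS (g.symm v)).symm, fun v => by simpa using (hW (g.symm v)).symm,
      fun v => by simpa using (hp (g.symm v)).symm⟩

lemma mem_symmetryGroup {S : Set V} {W : Submodule ℝ V} {p : Seminorm ℝ V} {g : V ≃ₗ[ℝ] V} :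
    g ∈ symmetryGroup S W p ↔
      (∀ v, g v ∈ S ↔ v ∈ S) ∧ (∀ v, g v ∈ W ↔ v ∈ W) ∧ ∀ v, p (g v) = p v :=
  Iff.rfl

/-- An automorphism preserving a finite spanning set is determined by a permutation of it. -/
lemma finite_symmetryGroup {S : Set V} (hS : S.Finite) (hspan : Submodule.span ℝ S = ⊤)
    (W : Submodule ℝ V) (p : Seminorm ℝ V) : Finite (symmetryGroup S W p) := by
  have : Finite S := hS.to_subtype
  refine Finite.of_injective
    (fun g : symmetryGroup S W p => fun s : S => (⟨g.1 s, (g.2.1 s).2 s.2⟩ : S)) ?_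
  intro g g' h
  refine Subtype.ext (LinearEquiv.toLinearMap_injective (LinearMap.ext_on hspan fun s hs => ?_))
  exact congrArg Subtype.val (congrFun h ⟨s, hs⟩)

variable (G : Subgroup (V ≃ₗ[ℝ] V)) [Fintype G]

def average (P : V →ₗ[ℝ] V) : V →ₗ[ℝ] V :=
  (Fintype.card G : ℝ)⁻¹ •
    ∑ g : G, ((g : V ≃ₗ[ℝ] V).symm : V →ₗ[ℝ] V) ∘ₗ P ∘ₗ ((g : V ≃ₗ[ℝ] V) : V →ₗ[ℝ] V)

variable {G}

lemma average_apply (P : V →ₗ[ℝ] V) (v : V) :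
    average G P v =
      (Fintype.card G : ℝ)⁻¹ • ∑ g : G, (g : V ≃ₗ[ℝ] V).symm (P ((g : V ≃ₗ[ℝ] V) v)) := by
  simp [average]

lemma average_apply_mem {W : Submodule ℝ V} (hGW : ∀ g ∈ G, ∀ w ∈ W, g w ∈ W)
    {P : V →ₗ[ℝ] V} (hP : ∀ v, P v ∈ W) (v : V) : average G P v ∈ W := by
  rw [average_apply]
  refine W.smul_mem _ (W.sum_mem fun g _ => ?_)
  exact hGW _ (G.inv_mem g.2) _ (hP _)

lemma average_apply_of_mem {W : Submodule ℝ V} (hGW : ∀ g ∈ G, ∀ w ∈ W, g w ∈ W)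
    {P : V →ₗ[ℝ] V} (hP : ∀ w ∈ W, P w = w) {w : V} (hw : w ∈ W) : average G P w = w := by
  have hcard : (Fintype.card G : ℝ) ≠ 0 := Nat.cast_ne_zero.2 Fintype.card_ne_zero
  rw [average_apply, Finset.sum_congr rfl fun g _ => by rw [hP _ (hGW g g.2 w hw),
    LinearEquiv.symm_apply_apply], Finset.sum_const, Finset.card_univ, ← Nat.cast_smul_eq_nsmul ℝ,
    smul_smul, inv_mul_cancel₀ hcard, one_smul]

lemma seminorm_average_apply_le (p : Seminorm ℝ V) (hGp : ∀ g ∈ G, ∀ v, p (g v) = p v)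
    {P : V →ₗ[ℝ] V} {K : ℝ} (hK : ∀ v, p (P v) ≤ K * p v) (v : V) :
    p (average G P v) ≤ K * p v := by
  have hcard : (0 : ℝ) < Fintype.card G := Nat.cast_pos.2 Fintype.card_pos
  rw [average_apply, map_smul_eq_mul, Real.norm_eq_abs, abs_inv, Nat.abs_cast]
  calc (Fintype.card G : ℝ)⁻¹ * p (∑ g : G, (g : V ≃ₗ[ℝ] V).symm (P ((g : V ≃ₗ[ℝ] V) v)))
      ≤ (Fintype.card G : ℝ)⁻¹ * ∑ g : G, p ((g : V ≃ₗ[ℝ] V).symm (P ((g : V ≃ₗ[ℝ] V) v))) := by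
        gcongr
        exact Finset.le_sum_of_subadditive p (map_zero p).le (map_add_le_add p) _ _
    _ ≤ (Fintype.card G : ℝ)⁻¹ * ∑ _g : G, K * p v := by
        gcongr with g
        have hinv := hGp _ (G.inv_mem g.2) (P ((g : V ≃ₗ[ℝ] V) v))
        rw [LinearEquiv.coe_inv] at hinv
        rw [hinv, ← hGp g g.2 v]
        exact hK _
    _ = K * p v := by
        rw [Finset.sum_const, Finset.card_univ, nsmul_eq_mul]
        field_simp

lemma average_apply_apply (P : V →ₗ[ℝ] V) {h : V ≃ₗ[ℝ] V} (hh : h ∈ G) (v : V) :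
    average G P (h v) = h (average G P v) := by
  rw [average_apply, average_apply, map_smul, map_sum]
  congr 1
  refine Fintype.sum_equiv (Equiv.mulRight ⟨h, hh⟩) _ _ fun g => ?_
  simp only [Equiv.coe_mulRight, Subgroup.coe_mul, LinearEquiv.mul_apply]
  rw [LinearEquiv.mul_eq_trans, LinearEquiv.symm_trans_apply, LinearEquiv.apply_symm_apply]

end Averaging

lemma span_coe_preimage_haar_eq_top (C : Set ℤ) :
    Submodule.span ℝ ((↑) ⁻¹' (haar '' {j | level j ∈ C}) : Set (haarSpan C)) = ⊤ :=
  Submodule.span_span_coe_preimage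

lemma L2inner_haar_eq_zero_of_commute {B C : Set ℤ} (hBC : B ⊆ C)
    (R : haarSpan C →ₗ[ℝ] haarSpan C)
    (hR : ∀ x : haarSpan C, (x : ℝ → ℝ) ∈ haarSpan B → R x = 0)
    (hcomm : ∀ i (hi : i ≠ 0), level i ∈ C → ∀ x, R (gmapEquiv C hi x) = gmapEquiv C hi (R x))
    (x : haarSpan C) {a : ℕ} (ha : level a ∈ B) : L2inner (R x) (haar a) = 0 := by
  have haC : haar a ∈ haarSpan C := haar_mem_haarSpan (hBC ha)
  have hint : ∀ y : haarSpan C, IntervalIntegrable (fun t => (y : ℝ → ℝ) t * haar a t) volume 0 1 :=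
    fun y => intervalIntegrable_haarSpan_mul y.2 haC
  have hx : x ∈ Submodule.span ℝ ((↑) ⁻¹' (haar '' {j | level j ∈ C}) : Set (haarSpan C)) := by
    rw [span_coe_preimage_haar_eq_top]; trivial
  induction hx using Submodule.span_induction with
  | mem x hx =>
    obtain ⟨j, hj, hxj⟩ := hx
    by_cases hjB : level j ∈ B
    · rw [hR x (hxj ▸ haar_mem_haarSpan hjB), ZeroMemClass.coe_zero, L2inner_zero_left]
    have hja : j ≠ a := by rintro rfl; exact hjB ha
    -- `g_w` for the deeper of `a`, `j` negates `h_w` and fixes the other one.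
    rcases le_total (level j) (level a) with h | h
    · have ha0 := ne_zero_of_level_le hja h
      have hfix : gmapEquiv C ha0 x = x :=
        Subtype.ext (by rw [coe_gmapEquiv_apply, ← hxj, gmap_haar_of_level_le ha0 hja h])
      refine L2inner_eq_zero_of_gmap_eq_neg ha0 (hint _) ?_ (gmap_haar_self ha0)
      rw [← coe_gmapEquiv_apply C ha0, ← hcomm a ha0 (hBC ha), hfix]
    · have hj0 := ne_zero_of_level_le hja.symm h
      have hneg : gmapEquiv C hj0 x = -x :=
        Subtype.ext (by rw [coe_gmapEquiv_apply, NegMemClass.coe_neg, ← hxj, gmap_haar_self hj0])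
      rw [L2inner_comm]
      refine L2inner_eq_zero_of_gmap_eq_neg hj0 (by simpa only [mul_comm] using hint (R x))
        (gmap_haar_of_level_le hj0 hja.symm h) ?_
      rw [← coe_gmapEquiv_apply C hj0, ← hcomm j hj0 hj, hneg, map_neg, NegMemClass.coe_neg]
  | zero => rw [map_zero, ZeroMemClass.coe_zero, L2inner_zero_left]
  | add x y _ _ hx hy =>
    rw [map_add, Submodule.coe_add, L2inner_add_left (hint _) (hint _), hx, hy, add_zero]
  | smul c x _ hx => rw [map_smul, Submodule.coe_smul, L2inner_smul_left, hx, mul_zero]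

lemma eq_of_L2inner_sub_haar_eq_zero {B : Set ℤ} {f u v : ℝ → ℝ} (hf : f ∈ boundedMeasurable)
    (hu : u ∈ haarSpan B) (hv : v ∈ haarSpan B)
    (hfu : ∀ a, level a ∈ B → L2inner (f - u) (haar a) = 0)
    (hfv : ∀ a, level a ∈ B → L2inner (f - v) (haar a) = 0) : u = v := by
  have hbm : ∀ w ∈ haarSpan B, f - w ∈ boundedMeasurable := fun w hw =>
    sub_mem hf (haarSpan_le_boundedMeasurable B hw)
  refine sub_eq_zero.1 (eq_zero_of_L2inner_haar_eq_zero (sub_mem hu hv) fun a ha => ?_)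
  have hha : haar a ∈ boundedMeasurable := haarSpan_le_boundedMeasurable B (haar_mem_haarSpan ha)
  rw [show u - v = (f - v) - (f - u) by abel,
    L2inner_sub_left (intervalIntegrable_mul_of_mem (hbm v hv) hha 0 1)
      (intervalIntegrable_mul_of_mem (hbm u hu) hha 0 1), hfu a ha, hfv a ha, sub_zero]

/-- `Q` is the average of the conjugates `g⁻¹ P g` over the finite group of automorphisms that
permute the `±h_j`, preserve `haarSpan B` and are isometries for `p`. -/
lemma exists_projection_commute_gmapEquiv {B C : Set ℤ} (hC : {j | level j ∈ C}.Finite)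
    (p : Seminorm ℝ (haarSpan C))
    (hiso : ∀ i (hi : i ≠ 0), level i ∈ C → ∀ x, p (gmapEquiv C hi x) = p x)
    (P : haarSpan C →ₗ[ℝ] haarSpan C) (hP1 : ∀ x, (P x : ℝ → ℝ) ∈ haarSpan B)
    (hP2 : ∀ x : haarSpan C, (x : ℝ → ℝ) ∈ haarSpan B → P x = x) {K : ℝ}
    (hK : ∀ x, p (P x) ≤ K * p x) :
    ∃ Q : haarSpan C →ₗ[ℝ] haarSpan C, (∀ x, (Q x : ℝ → ℝ) ∈ haarSpan B) ∧
      (∀ x : haarSpan C, (x : ℝ → ℝ) ∈ haarSpan B → Q x = x) ∧ (∀ x, p (Q x) ≤ K * p x) ∧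
      ∀ i (hi : i ≠ 0), level i ∈ C → ∀ x, Q (gmapEquiv C hi x) = gmapEquiv C hi (Q x) := by
  let W := (haarSpan B).comap (haarSpan C).subtype
  let G := symmetryGroup ((↑) ⁻¹' signedHaar C) W p
  have hGW : ∀ g ∈ G, ∀ w ∈ W, g w ∈ W := fun g hg w hw => (mem_symmetryGroup.1 hg).2.1 w |>.2 hw
  have hspan : Submodule.span ℝ ((↑) ⁻¹' signedHaar C : Set (haarSpan C)) = ⊤ :=
    top_le_iff.1 (span_coe_preimage_haar_eq_top C ▸
      Submodule.span_mono (preimage_mono subset_union_left))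
  have : Finite G :=
    finite_symmetryGroup ((signedHaar_finite hC).preimage Subtype.val_injective.injOn) hspan W p
  have : Fintype G := Fintype.ofFinite G
  refine ⟨average G P, average_apply_mem hGW hP1, fun x hx => average_apply_of_mem hGW hP2 hx,
    seminorm_average_apply_le p (fun g hg => (mem_symmetryGroup.1 hg).2.2) hK,
    fun i hi hiC x => average_apply_apply P ?_ x⟩
  exact ⟨fun _ => gmap_mem_signedHaar_iff hi, fun _ => gmap_mem_haarSpan_iff hi, hiso i hi hiC⟩

theorem seminorm_orthogonalProjection_apply_le {B C : Set ℤ} (hBC : B ⊆ C)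
    (hC : {j | level j ∈ C}.Finite) (N : (ℝ → ℝ) → ℝ)
    (hN1 : ∀ f ∈ haarSpan C, ∀ g ∈ haarSpan C, N (f + g) ≤ N f + N g)
    (hN2 : ∀ (c : ℝ), ∀ f ∈ haarSpan C, N (c • f) = |c| * N f)
    (hiso : ∀ i, i ≠ 0 → level i ∈ C → ∀ f ∈ haarSpan C, N (gmap i f) = N f)
    (PY : (ℝ → ℝ) →ₗ[ℝ] (ℝ → ℝ)) (hPY1 : ∀ f ∈ haarSpan C, PY f ∈ haarSpan B)
    (hPY3 : ∀ f ∈ haarSpan C, ∀ g ∈ haarSpan B, L2inner (f - PY f) g = 0)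
    (P : (ℝ → ℝ) →ₗ[ℝ] (ℝ → ℝ)) (hP1 : ∀ f ∈ haarSpan C, P f ∈ haarSpan B)
    (hP2 : ∀ f ∈ haarSpan B, P f = f) (K : ℝ) (hK : ∀ f ∈ haarSpan C, N (P f) ≤ K * N f) :
    ∀ f ∈ haarSpan C, N (PY f) ≤ K * N f := by
  have hBC' : haarSpan B ≤ haarSpan C := Submodule.span_mono (image_mono fun _ hj => hBC hj)
  let p : Seminorm ℝ (haarSpan C) := Seminorm.of (fun x => N x) (fun x y => hN1 x x.2 y y.2)
    (fun c x => by rw [Real.norm_eq_abs]; exact hN2 c x x.2)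
  obtain ⟨Q, hQB, hQid, hQK, hQcomm⟩ := exists_projection_commute_gmapEquiv hC p
    (fun i hi hiC x => hiso i hi hiC x x.2) (P.restrict fun f hf => hBC' (hP1 f hf))
    (fun x => hP1 x x.2) (fun x hx => Subtype.ext (hP2 x hx)) (fun x => hK x x.2)
  have hQ : ∀ x, ∀ a, level a ∈ B → L2inner (x - Q x) (haar a) = 0 := by
    refine L2inner_haar_eq_zero_of_commute hBC (LinearMap.id - Q) (fun x hx => ?_)
      (fun i hi hiC x => ?_)
    · rw [LinearMap.sub_apply, LinearMap.id_apply, hQid x hx, sub_self]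
    · simp only [LinearMap.sub_apply, LinearMap.id_apply, hQcomm i hi hiC, map_sub]
  intro f hf
  have hPYQ : PY f = Q ⟨f, hf⟩ := eq_of_L2inner_sub_haar_eq_zero
    (haarSpan_le_boundedMeasurable C hf) (hPY1 f hf) (hQB _)
    (fun a ha => hPY3 f hf _ (haar_mem_haarSpan ha)) (hQ ⟨f, hf⟩)
  rw [hPYQ]
  exact hQK ⟨f, hf⟩

lemma biUnion_haarLevel_eq (A : Finset ℤ) (hA : ∀ k ∈ A, -1 ≤ k) :
    (⋃ k ∈ A, if k = -1 then {haar 0} else haarLevel k.toNat) =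
      haar '' {j | level j ∈ (A : Set ℤ)} := by
  ext f
  simp only [mem_iUnion, mem_image, mem_ofPred_eq, Finset.mem_coe]
  constructor
  · rintro ⟨k, hk, hf⟩
    split_ifs at hf with hk1
    · exact ⟨0, level_eq_neg_one_iff.2 rfl ▸ hk1 ▸ hk, (mem_singleton_iff.1 hf).symm⟩
    · obtain ⟨j, hj, rfl⟩ := hf
      refine ⟨j, ?_, rfl⟩
      rw [level_eq_iff_mem_Ico.2 hj, Int.toNat_of_nonneg (by have := hA k hk; omega)]
      exact hk
  · rintro ⟨j, hj, rfl⟩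
    refine ⟨level j, hj, ?_⟩
    split_ifs with hj1
    · rw [level_eq_neg_one_iff.1 hj1]; rfl
    · refine ⟨j, level_eq_iff_mem_Ico.1 ?_, rfl⟩
      have := neg_one_le_level j
      omega

end HaarSystem

end

open HaarSystem in
theorem stmt11 (n : ℕ) (X : Submodule ℝ (ℝ → ℝ))
    (hX : X = Submodule.span ℝ (haar '' Set.Iio (2 ^ (n + 1))))
    (N : (ℝ → ℝ) → ℝ)
    (hN1 : ∀ f ∈ X, ∀ g ∈ X, N (f + g) ≤ N f + N g)
    (hN2 : ∀ (c : ℝ), ∀ f ∈ X, N (c • f) = |c| * N f)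
    (hiso : ∀ i : ℕ, 1 ≤ i → i < 2 ^ (n + 1) → ∀ f ∈ X, N (gmap i f) = N f)
    (A : Finset ℤ) (hAsub : ∀ k ∈ A, -1 ≤ k ∧ k ≤ (n : ℤ))
    (Y : Submodule ℝ (ℝ → ℝ))
    (hY : Y = Submodule.span ℝ
      (⋃ k ∈ A, if k = -1 then {haar 0} else haarLevel k.toNat))
    (PY : (ℝ → ℝ) →ₗ[ℝ] (ℝ → ℝ))
    (hPY1 : ∀ f ∈ X, PY f ∈ Y)
    (hPY3 : ∀ f ∈ X, ∀ g ∈ Y, L2inner (f - PY f) g = 0)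
    (P : (ℝ → ℝ) →ₗ[ℝ] (ℝ → ℝ))
    (hP1 : ∀ f ∈ X, P f ∈ Y) (hP2 : ∀ f ∈ Y, P f = f)
    (K : ℝ) (hK : ∀ f ∈ X, N (P f) ≤ K * N f) :
    ∀ f ∈ X, N (PY f) ≤ K * N f := by
  have hlevel : {j | level j ∈ Iic (n : ℤ)} = Iio (2 ^ (n + 1)) := by
    ext j; exact level_le_iff_lt_two_pow
  have hX' : X = haarSpan (Iic (n : ℤ)) := by rw [hX, haarSpan, hlevel]
  have hY' : Y = haarSpan A := by
    rw [hY, haarSpan, biUnion_haarLevel_eq A fun k hk => (hAsub k hk).1]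
  subst hX' hY'
  exact seminorm_orthogonalProjection_apply_le (fun k hk => (hAsub k hk).2) (hlevel ▸ finite_Iio _)
    N hN1 hN2 (fun i hi hiC => hiso i (Nat.one_le_iff_ne_zero.2 hi) (level_le_iff_lt_two_pow.1 hiC))
    PY hPY1 hPY3 P hP1 hP2 K hK
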